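/- Let h^{αβ} be a smooth symmetric tensor field on ℝ⁴ satisfying the linearized Einstein equation with cosmological constant Λ ≠ 0: ∂² h^{αβ} − ∂_μ(∂^β h^{αμ} + ∂^α h^{βμ}) − ½ η^{αβ} ∂² h − Λ(η^{αβ} h − 2 h^{αβ}) = 0. Then: (i) the Hilbert gauge condition ∂_α h^{αβ} = 0 holds; (ii) the trace satisfies the Klein–Gordon equation ∂² h + 2Λ h = 0; (iii) each component satisfies ∂² h^{αβ} + 2Λ h^{αβ} = 0. In other words, the field is a free massive field of mass m with m² = 2Λ. -/

import Mathlib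

/-- Minkowski metric η = diag(1,−1,−1,−1). -/
noncomputable def etaM (α β : Fin 4) : ℝ :=
  if α = β then (if α = 0 then 1 else -1) else 0

/-- Partial derivative ∂_μ of a real function on ℝ⁴. -/
noncomputable def pd (μ : Fin 4) (f : (Fin 4 → ℝ) → ℝ) : (Fin 4 → ℝ) → ℝ :=
  fun x => fderiv ℝ f x (Pi.single μ 1)

/-- d'Alembertian ∂² = η^{μν} ∂_μ ∂_ν with signature (+,−,−,−). -/
noncomputable def box (f : (Fin 4 → ℝ) → ℝ) : (Fin 4 → ℝ) → ℝ :=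
  fun x => ∑ μ : Fin 4, etaM μ μ * pd μ (pd μ f) x

/-- Trace h = η_{αβ} h^{αβ}. -/
noncomputable def trh (h : (Fin 4 → ℝ) → Fin 4 → Fin 4 → ℝ) : (Fin 4 → ℝ) → ℝ :=
  fun x => ∑ α : Fin 4, ∑ β : Fin 4, etaM α β * h x α β

lemma pd_smooth {f : (Fin 4 → ℝ) → ℝ} (hf : ContDiff ℝ (⊤ : ℕ∞) f) (μ : Fin 4) :
    ContDiff ℝ (⊤ : ℕ∞) (pd μ f) :=
  ((contDiff_infty_iff_fderiv.mp hf).2).clm_apply contDiff_const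

lemma pd_eq_zero_of {f : (Fin 4 → ℝ) → ℝ} (h : ∀ y, f y = 0) (μ : Fin 4) (x : Fin 4 → ℝ) :
    pd μ f x = 0 := by
  have : f = fun _ => (0:ℝ) := funext h
  simp [pd, this]

lemma pd_add {f g : (Fin 4 → ℝ) → ℝ} (hf : Differentiable ℝ f) (hg : Differentiable ℝ g)
    (μ : Fin 4) (x : Fin 4 → ℝ) :
    pd μ (fun y => f y + g y) x = pd μ f x + pd μ g x := by
  simp only [pd]
  rw [fderiv_fun_add (hf x) (hg x)]
  simp

lemma pd_sub {f g : (Fin 4 → ℝ) → ℝ} (hf : Differentiable ℝ f) (hg : Differentiable ℝ g)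
    (μ : Fin 4) (x : Fin 4 → ℝ) :
    pd μ (fun y => f y - g y) x = pd μ f x - pd μ g x := by
  simp only [pd]
  rw [fderiv_fun_sub (hf x) (hg x)]
  simp

lemma pd_const_mul {f : (Fin 4 → ℝ) → ℝ} (hf : Differentiable ℝ f) (c : ℝ)
    (μ : Fin 4) (x : Fin 4 → ℝ) :
    pd μ (fun y => c * f y) x = c * pd μ f x := by
  simp only [pd]
  rw [fderiv_const_mul (hf x) c]
  simp

lemma pd_sum {f : Fin 4 → (Fin 4 → ℝ) → ℝ} (hf : ∀ i, Differentiable ℝ (f i))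
    (μ : Fin 4) (x : Fin 4 → ℝ) :
    pd μ (fun y => ∑ i, f i y) x = ∑ i, pd μ (f i) x := by
  simp only [pd]
  rw [fderiv_fun_sum (fun i _ => (hf i x))]
  simp

lemma pd_comm {f : (Fin 4 → ℝ) → ℝ} (hf : ContDiff ℝ (⊤ : ℕ∞) f) (μ ν : Fin 4) (x : Fin 4 → ℝ) :
    pd μ (pd ν f) x = pd ν (pd μ f) x := by
  have hd : Differentiable ℝ f := hf.differentiable (by simp)
  have hf' : ContDiff ℝ (⊤ : ℕ∞) (fderiv ℝ f) := (contDiff_infty_iff_fderiv.mp hf).2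
  have hd' : Differentiable ℝ (fderiv ℝ f) := hf'.differentiable (by simp)
  have key : ∀ v w, fderiv ℝ (fderiv ℝ f) x v w = fderiv ℝ (fderiv ℝ f) x w v :=
    second_derivative_symmetric (fun y => (hd y).hasFDerivAt) (hd' x).hasFDerivAt
  have e : ∀ (ν μ : Fin 4), pd μ (pd ν f) x
      = fderiv ℝ (fderiv ℝ f) x (Pi.single μ 1) (Pi.single ν 1) := by
    intro ν μ
    show fderiv ℝ (fun y => fderiv ℝ f y (Pi.single ν 1)) x (Pi.single μ 1) = _
    rw [fderiv_clm_apply (hd' x) (differentiableAt_const _)]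
    simp
  rw [e, e, key]

lemma box_smooth {f : (Fin 4 → ℝ) → ℝ} (hf : ContDiff ℝ (⊤ : ℕ∞) f) : ContDiff ℝ (⊤ : ℕ∞) (box f) := by
  unfold box
  exact ContDiff.sum fun μ _ => contDiff_const.mul (pd_smooth (pd_smooth hf μ) μ)

lemma box_sum {f : Fin 4 → (Fin 4 → ℝ) → ℝ} (hf : ∀ i, ContDiff ℝ (⊤ : ℕ∞) (f i)) (x : Fin 4 → ℝ) :
    box (fun y => ∑ i, f i y) x = ∑ i, box (f i) x := by
  have h1 : ∀ μ : Fin 4, pd μ (fun y => ∑ i, f i y) = fun y => ∑ i, pd μ (f i) y :=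
    fun μ => funext fun y => pd_sum (fun i => (hf i).differentiable (by simp)) μ y
  simp only [box]
  rw [Finset.sum_comm]
  refine Finset.sum_congr rfl fun μ _ => ?_
  rw [h1 μ, pd_sum (fun i => (pd_smooth (hf i) μ).differentiable (by simp)), Finset.mul_sum]

lemma box_const_mul {f : (Fin 4 → ℝ) → ℝ} (hf : ContDiff ℝ (⊤ : ℕ∞) f) (c : ℝ) (x : Fin 4 → ℝ) :
    box (fun y => c * f y) x = c * box f x := by
  have h1 : ∀ μ : Fin 4, pd μ (fun y => c * f y) = fun y => c * pd μ f y :=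
    fun μ => funext fun y => pd_const_mul (hf.differentiable (by simp)) c μ y
  simp only [box, Finset.mul_sum]
  refine Finset.sum_congr rfl fun μ _ => ?_
  rw [h1 μ, pd_const_mul ((pd_smooth hf μ).differentiable (by simp))]
  ring

lemma pd_sub4 {a b c d : (Fin 4 → ℝ) → ℝ} (ha : Differentiable ℝ a) (hb : Differentiable ℝ b)
    (hc : Differentiable ℝ c) (hd : Differentiable ℝ d) (μ : Fin 4) (x : Fin 4 → ℝ) :
    pd μ (fun y => a y - b y - c y - d y) x = pd μ a x - pd μ b x - pd μ c x - pd μ d x := by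
  rw [pd_sub (f := fun y => a y - b y - c y) ((ha.sub hb).sub hc) hd, pd_sub (f := fun y => a y - b y) (ha.sub hb) hc, pd_sub ha hb]

lemma etasq (α : Fin 4) : etaM α α * etaM α α = 1 := by
  unfold etaM; simp; split <;> norm_num

/-- A solution of the linearized Einstein equation with cosmological constant
Λ ≠ 0 satisfies (i) the Hilbert gauge condition ∂_α h^{αβ} = 0, (ii) the
Klein–Gordon equation ∂²h + 2Λh = 0 for the trace, and (iii) the Klein–Gordon
equation ∂²h^{αβ} + 2Λh^{αβ} = 0 for each component: the graviton is massive
with m² = 2Λ. -/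
theorem massive_graviton_from_cosmological_constant
    (Λ : ℝ) (hΛ : Λ ≠ 0) (h : (Fin 4 → ℝ) → Fin 4 → Fin 4 → ℝ)
    (hsmooth : ∀ α β, ContDiff ℝ (⊤ : ℕ∞) (fun x => h x α β))
    (hsymm : ∀ x α β, h x α β = h x β α)
    (heq : ∀ (α β : Fin 4) (x : Fin 4 → ℝ),
      box (fun y => h y α β) x
        - (∑ μ : Fin 4, pd μ (fun y =>
            etaM β β * pd β (fun z => h z α μ) y
            + etaM α α * pd α (fun z => h z β μ) y) x)
        - (1 / 2) * etaM α β * box (trh h) x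
        - Λ * (etaM α β * trh h x - 2 * h x α β) = 0) :
    (∀ (β : Fin 4) (x : Fin 4 → ℝ), (∑ α : Fin 4, pd α (fun z => h z α β) x) = 0) ∧
    (∀ x : Fin 4 → ℝ, box (trh h) x + 2 * Λ * trh h x = 0) ∧
    (∀ (α β : Fin 4) (x : Fin 4 → ℝ),
      box (fun y => h y α β) x + 2 * Λ * h x α β = 0) := by
  have dd : ∀ {f : (Fin 4 → ℝ) → ℝ}, ContDiff ℝ (⊤ : ℕ∞) f → Differentiable ℝ f :=
    fun hf => hf.differentiable (by simp)
  have hsm : ∀ α β, ContDiff ℝ (⊤ : ℕ∞) (fun y => h y α β) :=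
    fun α β => (hsmooth α β).of_le (by simp)
  have hdh : ∀ α β, Differentiable ℝ (fun y => h y α β) := fun α β => dd (hsm α β)
  have hsymf : ∀ α β, (fun y => h y α β) = (fun y => h y β α) :=
    fun α β => funext fun y => hsymm y α β
  have htr : ContDiff ℝ (⊤ : ℕ∞) (trh h) := by
    unfold trh
    exact ContDiff.sum fun α _ => ContDiff.sum fun β _ => contDiff_const.mul (hsm α β)
  have hbtr : ContDiff ℝ (⊤ : ℕ∞) (box (trh h)) := box_smooth htr
  have tr_eq : trh h = fun x => ∑ α : Fin 4, etaM α α * h x α α := by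
    funext x
    unfold trh
    refine Finset.sum_congr rfl fun α _ => ?_
    rw [Finset.sum_eq_single α]
    · intro b _ hb
      have : etaM α b = 0 := by
        unfold etaM; rw [if_neg (fun e => hb e.symm)]
      rw [this, zero_mul]
    · simp
  -- Step A : trace identity for the double divergence
  have Sid : ∀ x : Fin 4 → ℝ,
      (∑ α : Fin 4, ∑ μ : Fin 4, pd μ (pd α (fun z => h z α μ)) x)
        = -(1/2) * box (trh h) x - Λ * trh h x := by
    intro x
    have T : (∑ α : Fin 4, (etaM α α * box (fun y => h y α α) x
        - 2 * (∑ μ : Fin 4, pd μ (pd α (fun z => h z α μ)) x)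
        - (1/2 : ℝ) * box (trh h) x
        - (Λ * trh h x - 2 * Λ * (etaM α α * h x α α)))) = 0 := by
      refine Finset.sum_eq_zero fun α _ => ?_
      have mid : (∑ μ : Fin 4, pd μ (fun y =>
            etaM α α * pd α (fun z => h z α μ) y
            + etaM α α * pd α (fun z => h z α μ) y) x)
          = (etaM α α + etaM α α) * ∑ μ : Fin 4, pd μ (pd α (fun z => h z α μ)) x := by
        rw [Finset.mul_sum]
        refine Finset.sum_congr rfl fun μ _ => ?_
        have hg : Differentiable ℝ (pd α (fun z => h z α μ)) := dd (pd_smooth (hsm α μ) α)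
        have hfe : (fun y => etaM α α * pd α (fun z => h z α μ) y
              + etaM α α * pd α (fun z => h z α μ) y)
            = fun y => (etaM α α + etaM α α) * pd α (fun z => h z α μ) y := by
          funext y; ring
        rw [hfe, pd_const_mul hg]
      have h0 := heq α α x
      rw [mid] at h0
      have hee := etasq α
      linear_combination etaM α α * h0 +
        (2 * (∑ μ : Fin 4, pd μ (pd α (fun z => h z α μ)) x)
          + (1/2) * box (trh h) x + Λ * trh h x) * hee
    have e1 : box (trh h) x = ∑ α : Fin 4, etaM α α * box (fun y => h y α α) x := by
      conv_lhs => rw [tr_eq]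
      rw [box_sum (f := fun i y => etaM i i * h y i i) (fun i => contDiff_const.mul (hsm i i)) x]
      exact Finset.sum_congr rfl fun α _ => box_const_mul (hsm α α) _ x
    have Tsplit : (∑ α : Fin 4, etaM α α * box (fun y => h y α α) x)
        - (∑ α : Fin 4, 2 * (∑ μ : Fin 4, pd μ (pd α (fun z => h z α μ)) x))
        - (∑ α : Fin 4, (1/2 : ℝ) * box (trh h) x)
        - (∑ α : Fin 4, (Λ * trh h x - 2 * Λ * (etaM α α * h x α α))) = 0 := by
      rw [← Finset.sum_sub_distrib, ← Finset.sum_sub_distrib, ← Finset.sum_sub_distrib]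
      exact T
    rw [← e1] at Tsplit
    have s2 : (∑ α : Fin 4, 2 * (∑ μ : Fin 4, pd μ (pd α (fun z => h z α μ)) x))
        = 2 * ∑ α : Fin 4, ∑ μ : Fin 4, pd μ (pd α (fun z => h z α μ)) x :=
      (Finset.mul_sum _ _ _).symm
    have s3 : (∑ _α : Fin 4, (1/2 : ℝ) * box (trh h) x) = 2 * box (trh h) x := by
      rw [Finset.sum_const]
      simp [Finset.card_univ]
      ring
    have s4 : (∑ α : Fin 4, (Λ * trh h x - 2 * Λ * (etaM α α * h x α α)))
        = 4 * Λ * trh h x - 2 * Λ * trh h x := by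
      rw [Finset.sum_sub_distrib, Finset.sum_const, ← Finset.mul_sum]
      have : (∑ α : Fin 4, etaM α α * h x α α) = trh h x := by
        conv_rhs => rw [tr_eq]
      rw [this]
      simp [Finset.card_univ]
      ring
    rw [s2, s3, s4] at Tsplit
    linarith
  have SidF : (fun x => ∑ α : Fin 4, ∑ μ : Fin 4, pd μ (pd α (fun z => h z α μ)) x)
      = fun x => -(1/2 : ℝ) * box (trh h) x - Λ * trh h x := funext Sid
  -- Step B : divergence of the field equation gives the Hilbert gauge
  have gauge : ∀ (β : Fin 4) (x : Fin 4 → ℝ),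
      (∑ α : Fin 4, pd α (fun z => h z α β) x) = 0 := by
    intro β x
    have hA2sm : ∀ α : Fin 4, ContDiff ℝ (⊤:ℕ∞) (fun y => ∑ μ : Fin 4, pd μ (fun y' =>
          etaM β β * pd β (fun z => h z α μ) y'
          + etaM α α * pd α (fun z => h z β μ) y') y) := by
      intro α
      refine ContDiff.sum fun μ _ => pd_smooth ?_ μ
      exact (contDiff_const.mul (pd_smooth (hsm α μ) β)).add
        (contDiff_const.mul (pd_smooth (hsm β μ) α))
    have hzero : ∑ α : Fin 4, pd α (fun y =>
        box (fun y' => h y' α β) y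
        - (∑ μ : Fin 4, pd μ (fun y' =>
            etaM β β * pd β (fun z => h z α μ) y'
            + etaM α α * pd α (fun z => h z β μ) y') y)
        - 1 / 2 * etaM α β * box (trh h) y
        - Λ * (etaM α β * trh h y - 2 * h y α β)) x = 0 :=
      Finset.sum_eq_zero fun α _ => pd_eq_zero_of (heq α β) α x
    have expand : ∀ α : Fin 4, pd α (fun y =>
        box (fun y' => h y' α β) y
        - (∑ μ : Fin 4, pd μ (fun y' =>
            etaM β β * pd β (fun z => h z α μ) y'
            + etaM α α * pd α (fun z => h z β μ) y') y)
        - 1 / 2 * etaM α β * box (trh h) y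
        - Λ * (etaM α β * trh h y - 2 * h y α β)) x
        = pd α (box (fun y' => h y' α β)) x
          - pd α (fun y => ∑ μ : Fin 4, pd μ (fun y' =>
              etaM β β * pd β (fun z => h z α μ) y'
              + etaM α α * pd α (fun z => h z β μ) y') y) x
          - pd α (fun y => 1 / 2 * etaM α β * box (trh h) y) x
          - pd α (fun y => Λ * (etaM α β * trh h y - 2 * h y α β)) x := fun α =>
      pd_sub4 (dd (box_smooth (hsm α β))) (dd (hA2sm α)) (dd (contDiff_const.mul hbtr))
        (dd (contDiff_const.mul ((contDiff_const.mul htr).sub (contDiff_const.mul (hsm α β))))) α x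
    have p1 : ∀ α : Fin 4, pd α (box (fun y' => h y' α β)) x
        = ∑ μ : Fin 4, etaM μ μ * pd α (pd μ (pd μ (fun y' => h y' α β))) x := by
      intro α
      have hb : box (fun y' => h y' α β)
          = fun y => ∑ μ : Fin 4, etaM μ μ * pd μ (pd μ (fun y' => h y' α β)) y := rfl
      rw [hb, pd_sum (fun μ => (dd (pd_smooth (pd_smooth (hsm α β) μ) μ)).const_mul _) α x]
      exact Finset.sum_congr rfl fun μ _ =>
        pd_const_mul (dd (pd_smooth (pd_smooth (hsm α β) μ) μ)) _ α x
    have p2 : ∀ α : Fin 4, pd α (fun y => ∑ μ : Fin 4, pd μ (fun y' =>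
          etaM β β * pd β (fun z => h z α μ) y'
          + etaM α α * pd α (fun z => h z β μ) y') y) x
        = ∑ μ : Fin 4, (etaM β β * pd β (pd μ (pd α (fun z => h z α μ))) x
            + etaM α α * pd μ (pd α (pd α (fun z => h z β μ))) x) := by
      intro α
      rw [pd_sum (fun μ => dd (pd_smooth ((contDiff_const.mul (pd_smooth (hsm α μ) β)).add
          (contDiff_const.mul (pd_smooth (hsm β μ) α))) μ)) α x]
      refine Finset.sum_congr rfl fun μ _ => ?_
      have hG : pd μ (fun y' => etaM β β * pd β (fun z => h z α μ) y'
            + etaM α α * pd α (fun z => h z β μ) y')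
          = fun y => etaM β β * pd μ (pd β (fun z => h z α μ)) y
            + etaM α α * pd μ (pd α (fun z => h z β μ)) y := by
        funext y
        rw [pd_add (dd (contDiff_const.mul (pd_smooth (hsm α μ) β)))
            (dd (contDiff_const.mul (pd_smooth (hsm β μ) α))) μ y,
          pd_const_mul (dd (pd_smooth (hsm α μ) β)) _ μ y,
          pd_const_mul (dd (pd_smooth (hsm β μ) α)) _ μ y]
      rw [hG, pd_add (dd (contDiff_const.mul (pd_smooth (pd_smooth (hsm α μ) β) μ)))
          (dd (contDiff_const.mul (pd_smooth (pd_smooth (hsm β μ) α) μ))) α x,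
        pd_const_mul (dd (pd_smooth (pd_smooth (hsm α μ) β) μ)) _ α x,
        pd_const_mul (dd (pd_smooth (pd_smooth (hsm β μ) α) μ)) _ α x]
      congr 1
      · congr 1
        rw [show pd μ (pd β (fun z => h z α μ)) = pd β (pd μ (fun z => h z α μ)) from
            funext (pd_comm (hsm α μ) μ β),
          pd_comm (pd_smooth (hsm α μ) μ) α β x,
          show pd α (pd μ (fun z => h z α μ)) = pd μ (pd α (fun z => h z α μ)) from
            funext (pd_comm (hsm α μ) α μ)]
      · congr 1
        exact pd_comm (pd_smooth (hsm β μ) α) α μ x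
    have p3 : ∀ α : Fin 4, pd α (fun y => 1 / 2 * etaM α β * box (trh h) y) x
        = 1 / 2 * etaM α β * pd α (box (trh h)) x := fun α =>
      pd_const_mul (dd hbtr) _ α x
    have p4 : ∀ α : Fin 4, pd α (fun y => Λ * (etaM α β * trh h y - 2 * h y α β)) x
        = Λ * (etaM α β * pd α (trh h) x - 2 * pd α (fun y => h y α β) x) := by
      intro α
      rw [pd_const_mul (dd ((contDiff_const.mul htr).sub (contDiff_const.mul (hsm α β)))) Λ α x,
        pd_sub (dd (contDiff_const.mul htr)) (dd (contDiff_const.mul (hsm α β))) α x,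
        pd_const_mul (dd htr) _ α x, pd_const_mul (hdh α β) _ α x]
    -- assemble
    simp only [expand, p1, p2, p3, p4] at hzero
    -- split the total sum
    rw [Finset.sum_sub_distrib, Finset.sum_sub_distrib, Finset.sum_sub_distrib] at hzero
    -- sum of squares part cancels: ∑α ∑μ etaM μ μ * ... = second part of middle
    have hQ1R : (∑ α : Fin 4, ∑ μ : Fin 4, etaM μ μ * pd α (pd μ (pd μ (fun y' => h y' α β))) x)
        = ∑ α : Fin 4, ∑ μ : Fin 4, etaM α α * pd μ (pd α (pd α (fun z => h z β μ))) x := by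
      rw [Finset.sum_comm]
      refine Finset.sum_congr rfl fun α _ => Finset.sum_congr rfl fun μ _ => ?_
      rw [hsymf β μ]
    have hmidsplit : (∑ α : Fin 4, ∑ μ : Fin 4,
          (etaM β β * pd β (pd μ (pd α (fun z => h z α μ))) x
            + etaM α α * pd μ (pd α (pd α (fun z => h z β μ))) x))
        = (∑ α : Fin 4, ∑ μ : Fin 4, etaM β β * pd β (pd μ (pd α (fun z => h z α μ))) x)
          + (∑ α : Fin 4, ∑ μ : Fin 4, etaM α α * pd μ (pd α (pd α (fun z => h z β μ))) x) := by
      simp [Finset.sum_add_distrib]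
    have hT2a : (∑ α : Fin 4, ∑ μ : Fin 4, etaM β β * pd β (pd μ (pd α (fun z => h z α μ))) x)
        = etaM β β * (-(1/2 : ℝ) * pd β (box (trh h)) x - Λ * pd β (trh h) x) := by
      have h1 : (∑ α : Fin 4, ∑ μ : Fin 4, etaM β β * pd β (pd μ (pd α (fun z => h z α μ))) x)
          = etaM β β * pd β (fun y => ∑ α : Fin 4, ∑ μ : Fin 4,
              pd μ (pd α (fun z => h z α μ)) y) x := by
        rw [pd_sum (fun α => dd (ContDiff.sum fun μ _ =>
              pd_smooth (pd_smooth (hsm α μ) α) μ)) β x, Finset.mul_sum]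
        refine Finset.sum_congr rfl fun α _ => ?_
        rw [pd_sum (fun μ => dd (pd_smooth (pd_smooth (hsm α μ) α) μ)) β x, Finset.mul_sum]
      rw [h1, SidF, pd_sub (dd (contDiff_const.mul hbtr)) (dd (contDiff_const.mul htr)) β x,
        pd_const_mul (dd hbtr) _ β x, pd_const_mul (dd htr) _ β x]
    have hS3 : (∑ α : Fin 4, 1 / 2 * etaM α β * pd α (box (trh h)) x)
        = 1 / 2 * etaM β β * pd β (box (trh h)) x := by
      rw [Finset.sum_eq_single β]
      · intro b _ hb
        have : etaM b β = 0 := by unfold etaM; rw [if_neg hb]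
        rw [this]; ring
      · simp
    have hS4 : (∑ α : Fin 4, Λ * (etaM α β * pd α (trh h) x - 2 * pd α (fun y => h y α β) x))
        = Λ * (etaM β β * pd β (trh h) x - 2 * ∑ α : Fin 4, pd α (fun y => h y α β) x) := by
      have : ∀ α : Fin 4, Λ * (etaM α β * pd α (trh h) x - 2 * pd α (fun y => h y α β) x)
          = Λ * etaM α β * pd α (trh h) x - 2 * Λ * pd α (fun y => h y α β) x := by
        intro α; ring
      rw [Finset.sum_congr rfl fun α _ => this α, Finset.sum_sub_distrib, ← Finset.mul_sum,
        Finset.sum_eq_single β]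
      · ring
      · intro b _ hb
        have : etaM b β = 0 := by unfold etaM; rw [if_neg hb]
        rw [this]; ring
      · simp
    rw [hmidsplit, hQ1R, hT2a, hS3, hS4] at hzero
    have h2 : Λ * (∑ α : Fin 4, pd α (fun y => h y α β) x) = 0 := by linarith
    exact (mul_eq_zero.mp h2).resolve_left hΛ
  -- Step C : Klein-Gordon equation for the trace
  have traceKG : ∀ x : Fin 4 → ℝ, box (trh h) x + 2 * Λ * trh h x = 0 := by
    intro x
    have hz : (∑ α : Fin 4, ∑ μ : Fin 4, pd μ (pd α (fun z => h z α μ)) x) = 0 := by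
      rw [Finset.sum_comm]
      refine Finset.sum_eq_zero fun μ _ => ?_
      rw [← pd_sum (fun α => dd (pd_smooth (hsm α μ) α)) μ x,
        pd_eq_zero_of (gauge μ) μ x]
    have hS := Sid x
    rw [hz] at hS
    linarith
  refine ⟨gauge, traceKG, fun α β x => ?_⟩
  -- Step D : Klein-Gordon equation for each component
  have mid0 : (∑ μ : Fin 4, pd μ (fun y =>
      etaM β β * pd β (fun z => h z α μ) y
      + etaM α α * pd α (fun z => h z β μ) y) x) = 0 := by
    have split : ∀ μ : Fin 4, pd μ (fun y =>
        etaM β β * pd β (fun z => h z α μ) y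
        + etaM α α * pd α (fun z => h z β μ) y) x
        = etaM β β * pd β (pd μ (fun z => h z μ α)) x
          + etaM α α * pd α (pd μ (fun z => h z μ β)) x := by
      intro μ
      rw [pd_add (dd (contDiff_const.mul (pd_smooth (hsm α μ) β)))
          (dd (contDiff_const.mul (pd_smooth (hsm β μ) α))) μ x,
        pd_const_mul (dd (pd_smooth (hsm α μ) β)) _ μ x,
        pd_const_mul (dd (pd_smooth (hsm β μ) α)) _ μ x,
        pd_comm (hsm α μ) μ β x, pd_comm (hsm β μ) μ α x, hsymf α μ, hsymf β μ]
    rw [Finset.sum_congr rfl fun μ _ => split μ, Finset.sum_add_distrib]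
    have z1 : (∑ μ : Fin 4, etaM β β * pd β (pd μ (fun z => h z μ α)) x) = 0 := by
      rw [← Finset.mul_sum, ← pd_sum (fun μ => dd (pd_smooth (hsm μ α) μ)) β x,
        pd_eq_zero_of (gauge α) β x, mul_zero]
    have z2 : (∑ μ : Fin 4, etaM α α * pd α (pd μ (fun z => h z μ β)) x) = 0 := by
      rw [← Finset.mul_sum, ← pd_sum (fun μ => dd (pd_smooth (hsm μ β) μ)) α x,
        pd_eq_zero_of (gauge β) α x, mul_zero]
    rw [z1, z2, add_zero]
  have h0 := heq α β x
  rw [mid0] at h0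
  linear_combination h0 + (1/2) * etaM α β * (traceKG x)
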